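/- Let V be a finite-dimensional complex vector space, let f be a linear endomorphism of V that is not nilpotent, and let λ ∈ ℂ. If λ • f is similar to f, then λ is a root of unity, i.e. there exists a positive integer n with λ^n = 1. -/

import Mathlib

/-!
Similarity preserves the spectrum, and `λ • f` has eigenvalue `λ * μ` whenever `f` has
eigenvalue `μ`; so multiplication by `λ` maps the finite spectrum of `f` into itself. Since `f`
is not nilpotent and `ℂ` is algebraically closed, `f` has a nonzero eigenvalue `μ`, and the orbit
`λ ^ k * μ` inside the spectrum must repeat, which forces `λ` to have finite order.
-/

theorem isOfFinOrder_of_mapsTo_mul {G₀ : Type*} [GroupWithZero G₀] {S : Set G₀}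
    (hS : S.Finite) {l μ : G₀} (hl : l ≠ 0) (hlS : Set.MapsTo (l * ·) S S) (hμS : μ ∈ S)
    (hμ : μ ≠ 0) : IsOfFinOrder l := by
  have horbit (k : ℕ) : l ^ k * μ ∈ S := by
    induction k with
    | zero => simpa using hμS
    | succ k ih => rw [pow_succ', mul_assoc]; exact hlS ih
  obtain ⟨i, -, j, -, hij, heq⟩ :=
    Set.infinite_univ.exists_ne_map_eq_of_mapsTo (fun k _ ↦ horbit k) hS
  have hpow : l ^ i = l ^ j := mul_right_cancel₀ hμ heq
  refine isOfFinOrder_iff_zpow_eq_one.mpr ⟨i - j, by omega, ?_⟩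
  rw [zpow_sub₀ hl, zpow_natCast, zpow_natCast, hpow, div_self (pow_ne_zero j hl)]

namespace Module.End

variable {K V : Type*} [Field K] [AddCommGroup V] [Module K V]

theorem HasEigenvalue.smul {f : End K V} {μ : K} (h : f.HasEigenvalue μ) (l : K) :
    (l • f).HasEigenvalue (l * μ) := by
  obtain ⟨v, hv⟩ := h.exists_hasEigenvector
  refine hasEigenvalue_of_hasEigenvector (x := v) ⟨?_, hv.2⟩
  rw [mem_eigenspace_iff, LinearMap.smul_apply, hv.apply_eq_smul, smul_smul]

theorem exists_hasEigenvalue_ne_zero_of_not_isNilpotent [IsAlgClosed K] [FiniteDimensional K V]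
    {f : End K V} (hf : ¬IsNilpotent f) : ∃ μ, μ ≠ 0 ∧ f.HasEigenvalue μ := by
  by_contra! h
  have hbot : ∀ μ ≠ 0, f.maxGenEigenspace μ = ⊥ := fun μ hμ ↦
    not_not.mp fun hne ↦ h μ hμ (HasUnifEigenvalue.lt one_pos hne)
  have htop : f.maxGenEigenspace 0 = ⊤ := by
    refine top_le_iff.mp (f.iSup_maxGenEigenspace_eq_top ▸ iSup_le fun μ ↦ ?_)
    rcases eq_or_ne μ 0 with rfl | hμ
    · rfl
    · simp [hbot μ hμ]
  refine hf (isNilpotent_iff_of_finite.mpr fun v ↦ ?_)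
  simpa using (f.mem_maxGenEigenspace 0 v).mp (htop ▸ Submodule.mem_top)

end Module.End

/-- Roots-of-unity form of Lemma 5.1: if `f` is a non-nilpotent endomorphism of a
finite-dimensional complex vector space and `λ • f` is similar to `f`, then `λ` is a
root of unity. -/
theorem stmt_4 {V : Type*} [AddCommGroup V] [Module ℂ V] [FiniteDimensional ℂ V]
    (f : V →ₗ[ℂ] V) (hf : ¬ IsNilpotent f) (l : ℂ)
    (h : ∃ u : V ≃ₗ[ℂ] V, l • f = u.toLinearMap ∘ₗ f ∘ₗ u.symm.toLinearMap) :
    ∃ n : ℕ, 0 < n ∧ l ^ n = 1 := by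
  obtain ⟨u, hu⟩ := h
  change l • f = u.conjAlgEquiv ℂ f at hu
  have hl : l ≠ 0 := by
    rintro rfl
    rw [zero_smul, eq_comm, map_eq_zero_iff _ (u.conjAlgEquiv ℂ).injective] at hu
    exact hf (hu ▸ IsNilpotent.zero)
  have hspec : spectrum ℂ (l • f) = spectrum ℂ f := by rw [hu, AlgEquiv.spectrum_eq]
  have hmaps : Set.MapsTo (l * ·) (spectrum ℂ f) (spectrum ℂ f) := fun μ hμ ↦ by
    rw [← hspec, ← Module.End.hasEigenvalue_iff_mem_spectrum]
    exact (Module.End.hasEigenvalue_iff_mem_spectrum.mpr hμ).smul l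
  obtain ⟨μ, hμ, hμf⟩ := Module.End.exists_hasEigenvalue_ne_zero_of_not_isNilpotent hf
  exact (isOfFinOrder_of_mapsTo_mul (Module.End.finite_spectrum f) hl hmaps
    hμf.mem_spectrum hμ).exists_pow_eq_one
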